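/- For every subset S ⊆ P of patients assigned to a hospital-day pair and every number of opened ORs y ≥ 1, the optimal expected cancellation cost satisfies Q(S, y) ≥ (1/|𝒮|) · Σ_{s ∈ 𝒮} (min_{p ∈ P} c p / T s p) · (Σ_{p ∈ S} T s p − B · y). (This is the validity of the subproblem-relaxation lower-bounding constraint added to the three-stage LBBD master problem.) -/
import Mathlib


open Finset

/-- The single-OR cancellation cost of a set `A` of patients assigned to an operating
room with time limit `B`, for duration function `T`. -/
noncomputable def qcost {α : Type*} [DecidableEq α] (c T : α → ℝ) {B : ℝ} (hB : 0 ≤ B)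
    (A : Finset α) : ℝ :=
  (A.powerset.filter (fun Z => ∑ p ∈ Z, T p ≤ B)).inf'
    ⟨∅, by simp [hB]⟩ (fun Z => ∑ p ∈ A \ Z, c p)

/-- The optimal expected cancellation cost of assigning the patients of `S` to `y`
opened operating rooms: the minimum, over assignments `a` of patients to ORs, of the
average over scenarios `s ∈ 𝒮` of the sum over ORs `r` of the single-OR cancellation
cost of the patients of `S` assigned to `r`. -/
noncomputable def Qexp {α σ : Type*} [DecidableEq α] (c : α → ℝ) (𝒮 : Finset σ)
    (T : σ → α → ℝ) {B : ℝ} (hB : 0 ≤ B) (S : Finset α) (y : ℕ) : ℝ :=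
  sInf { v : ℝ | ∃ a : α → Fin y,
    v = (𝒮.card : ℝ)⁻¹ *
      ∑ s ∈ 𝒮, ∑ r : Fin y, qcost c (T s) hB (S.filter (fun p => a p = r)) }

/-- Validity of the subproblem-relaxation lower bound for the three-stage LBBD master
problem: for every `S ⊆ P` and every number of opened ORs `y ≥ 1`,
`Q(S, y) ≥ (1/|𝒮|) · Σ_{s ∈ 𝒮} (min_{p ∈ P} c p / T s p) · (Σ_{p ∈ S} T s p − B·y)`. -/
theorem Qexp_relaxation_lower_bound {α σ : Type*} [DecidableEq α]
    (P : Finset α) (hP : P.Nonempty) (c : α → ℝ) (𝒮 : Finset σ) (h𝒮 : 𝒮.Nonempty)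
    (T : σ → α → ℝ) (B : ℝ)
    (hc : ∀ p ∈ P, 0 ≤ c p) (hT : ∀ s ∈ 𝒮, ∀ p ∈ P, 0 < T s p) (hB : 0 ≤ B)
    (S : Finset α) (hS : S ⊆ P) (y : ℕ) (hy : 1 ≤ y) :
    Qexp c 𝒮 T hB S y ≥ (𝒮.card : ℝ)⁻¹ *
      ∑ s ∈ 𝒮, (P.inf' hP (fun p => c p / T s p)) * ((∑ p ∈ S, T s p) - B * y) := by
  have key : ∀ (cc tt : α → ℝ) (m : ℝ), 0 ≤ m → ∀ A : Finset α,
      (∀ p ∈ A, m * tt p ≤ cc p) →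
      m * ((∑ p ∈ A, tt p) - B) ≤ qcost cc tt hB A := by
    intro cc tt m hm A hA
    unfold qcost
    apply Finset.le_inf'
    intro Z hZ
    simp only [Finset.mem_filter, Finset.mem_powerset] at hZ
    obtain ⟨hZA, hZB⟩ := hZ
    have h1 : ∑ p ∈ A \ Z, m * tt p ≤ ∑ p ∈ A \ Z, cc p :=
      Finset.sum_le_sum fun p hp => hA p (Finset.mem_sdiff.mp hp).1
    have h2 : ∑ p ∈ A \ Z, m * tt p = m * ((∑ p ∈ A, tt p) - ∑ p ∈ Z, tt p) := by
      rw [← Finset.mul_sum, Finset.sum_sdiff_eq_sub hZA]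
    calc m * ((∑ p ∈ A, tt p) - B)
        ≤ m * ((∑ p ∈ A, tt p) - ∑ p ∈ Z, tt p) := by
          apply mul_le_mul_of_nonneg_left _ hm; linarith
      _ ≤ ∑ p ∈ A \ Z, cc p := by rw [← h2]; exact h1
  unfold Qexp
  haveI : NeZero y := ⟨by omega⟩
  apply ge_iff_le.mpr
  refine le_csInf ⟨_, ⟨fun _ => (0 : Fin y), rfl⟩⟩ ?_
  rintro v ⟨a, rfl⟩
  apply mul_le_mul_of_nonneg_left _ (by positivity)
  apply Finset.sum_le_sum
  intro s hs
  set m := P.inf' hP (fun p => c p / T s p) with hm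
  have hm0 : 0 ≤ m := by
    obtain ⟨p, hp, hpe⟩ := Finset.exists_mem_eq_inf' hP (fun p => c p / T s p)
    rw [hm, hpe]
    exact div_nonneg (hc p hp) (hT s hs p hp).le
  have hfib : ∑ r : Fin y, ∑ p ∈ S.filter (fun p => a p = r), T s p = ∑ p ∈ S, T s p := by
    exact Finset.sum_fiberwise S a (T s)
  have step : ∀ r : Fin y,
      m * ((∑ p ∈ S.filter (fun p => a p = r), T s p) - B) ≤
        qcost c (T s) hB (S.filter (fun p => a p = r)) := by
    intro r
    apply key c (T s) m hm0
    intro p hp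
    have hpP : p ∈ P := hS (Finset.mem_filter.mp hp).1
    have hmle : m ≤ c p / T s p := Finset.inf'_le _ hpP
    have := (le_div_iff₀ (hT s hs p hpP)).mp hmle
    linarith
  calc m * ((∑ p ∈ S, T s p) - B * y)
      = ∑ r : Fin y, m * ((∑ p ∈ S.filter (fun p => a p = r), T s p) - B) := by
        rw [← Finset.mul_sum, Finset.sum_sub_distrib, hfib, Finset.sum_const,
          Finset.card_univ, Fintype.card_fin, nsmul_eq_mul, mul_comm (y : ℝ) B]
    _ ≤ ∑ r : Fin y, qcost c (T s) hB (S.filter (fun p => a p = r)) :=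
        Finset.sum_le_sum fun r _ => step r
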